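/- (Cheap version of the Kabatjanskii–Levenstein bound.) Let x_1, …, x_m be unit vectors in R^d such that |x_i' x_j| ≤ A d^{−1/2} for all i ≠ j, for some A with 1/2 ≤ A ≤ (1/2)√d. Then m ≤ (C d / A²)^{C A²} for some universal constant C. -/

import Mathlib

open MeasureTheory ProbabilityTheory Filter Finset

noncomputable section

namespace SvS

/-- The `i`-th standard unit (weighting) vector. -/
def unitVec (i : ℕ) : ℕ → ℝ := fun ν => if ν = i then 1 else 0

/-- The high-dimensional linear-process time series model of Steland and von Sachs:
dimension `d n`, linear process coefficients `c n j ν`, innovations `ε`,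
decay parameter `θ` and moment parameter `δ`, on a probability space with measure `P`. -/
structure Model (Ω : Type) [MeasurableSpace Ω] where
  P : Measure Ω
  d : ℕ → ℕ
  c : ℕ → ℕ → ℕ → ℝ
  ε : ℤ → Ω → ℝ
  θ : ℝ
  δ : ℝ

variable {Ω : Type} [MeasurableSpace Ω]

/-- Generic centered partial-sum bilinear form
`D_{nk}(v,w) = v' (Σ̂_{nk} − E Σ̂_{nk}) w` for an arbitrary array `Yg`. -/
def Dgen (P : Measure Ω) (d : ℕ → ℕ) (Yg : ℕ → ℤ → ℕ → Ω → ℝ)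
    (n : ℕ) (v w : ℕ → ℝ) (k : ℕ) (ω : Ω) : ℝ :=
  ∑ ν ∈ range (d n), ∑ μ ∈ range (d n), v ν * w μ *
    ∑ i ∈ Icc 1 k, (Yg n i ν ω * Yg n i μ ω - ∫ ω', Yg n i ν ω' * Yg n i μ ω' ∂P)

/-- Generic weighted average of centered cross bilinear forms
`D_k = Σ_{n,m} λ_n λ_m Σ_{ρ,σ} μ_ρ μ_σ v_n^{(ρ)}' (Σ̂_{nmk} − E Σ̂_{nmk}) w_m^{(σ)}`. -/
def DcrossGen (P : Measure Ω) (d : ℕ → ℕ) (Yg : ℕ → ℤ → ℕ → Ω → ℝ)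
    (lamw muw : ℕ → ℝ) (L : ℕ → ℕ) (v w : ℕ → ℕ → ℕ → ℝ) (k : ℕ) (ω : Ω) : ℝ :=
  ∑' n : ℕ, ∑' m : ℕ, lamw n * lamw m *
    ∑ ρ ∈ range (L n), ∑ σ ∈ range (L m), muw ρ * muw σ *
      ∑ i ∈ Icc 1 k,
        ((∑ ν ∈ range (d n), v n ρ ν * Yg n i ν ω) *
            (∑ ν ∈ range (d m), w m σ ν * Yg m i ν ω)
          - ∫ ω', (∑ ν ∈ range (d n), v n ρ ν * Yg n i ν ω') *
              (∑ ν ∈ range (d m), w m σ ν * Yg m i ν ω') ∂P)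

namespace Model

variable (M : Model Ω)

/-- The coordinate processes `Y_{ni}^{(ν)} = Σ_{j≥0} c_{nj}^{(ν)} ε_{i−j}`. -/
def Y (n : ℕ) (i : ℤ) (ν : ℕ) (ω : Ω) : ℝ := ∑' j : ℕ, M.c n j ν * M.ε (i - (j : ℤ)) ω

/-- The projected time series `v' Y_{ni}`. -/
def Yproj (n : ℕ) (v : ℕ → ℝ) (i : ℤ) (ω : Ω) : ℝ :=
  ∑ ν ∈ range (M.d n), v ν * M.Y n i ν ω

/-- The centered products `ξ_i^{(n)}(v,w) = (v'Y_{ni})(w'Y_{ni}) − E[(v'Y_{ni})(w'Y_{ni})]`. -/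
def xi (n : ℕ) (v w : ℕ → ℝ) (i : ℤ) (ω : Ω) : ℝ :=
  M.Yproj n v i ω * M.Yproj n w i ω - ∫ ω', M.Yproj n v i ω' * M.Yproj n w i ω' ∂M.P

/-- `D_{nk}(v,w) = v'(Σ̂_{nk} − E Σ̂_{nk})w`. -/
def D (n : ℕ) (v w : ℕ → ℝ) (k : ℕ) (ω : Ω) : ℝ :=
  Dgen M.P M.d M.Y n v w k ω

/-- `σ_k² = E(ε_k²)`. -/
def σ2 (k : ℤ) : ℝ := ∫ ω, (M.ε k ω) ^ 2 ∂M.P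

/-- `γ_k = E(ε_k⁴)`. -/
def γ4 (k : ℤ) : ℝ := ∫ ω, (M.ε k ω) ^ 4 ∂M.P

/-- The filtration `F_m = σ(ε_i : i ≤ m)`. -/
def filt (m : ℤ) : MeasurableSpace Ω :=
  ⨆ i : {i : ℤ // i ≤ m}, MeasurableSpace.comap (M.ε i.1) inferInstance

/-- The coefficients `f_{l,j}^{(n)}(v,w)`. -/
def ff (n : ℕ) (v w : ℕ → ℝ) (l j : ℕ) : ℝ :=
  if l = 0 then
    ∑ ν ∈ range (M.d n), ∑ μ ∈ range (M.d n), v ν * w μ * (M.c n j ν * M.c n j μ)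
  else
    ∑ ν ∈ range (M.d n), ∑ μ ∈ range (M.d n), v ν * w μ *
      (M.c n j ν * M.c n (j + l) μ + M.c n j μ * M.c n (j + l) ν)

/-- The tail coefficients `f̃_{l,i}^{(n)}(v,w) = Σ_{j ≥ i} f_{l,j}^{(n)}(v,w)`. -/
def ftil (n : ℕ) (v w : ℕ → ℝ) (l i : ℕ) : ℝ := ∑' j : ℕ, M.ff n v w l (i + j)

/-- The approximating martingales
`M_{m'}^{(n)}(v,w) = Σ_{k=0}^{m'} ( f̃_{0,0}(ε_k² − σ_k²) + ε_k Σ_{l≥1} f̃_{l,0} ε_{k−l} )`. -/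
def Mart (n : ℕ) (v w : ℕ → ℝ) (m' : ℕ) (ω : Ω) : ℝ :=
  ∑ k ∈ range (m' + 1),
    (M.ftil n v w 0 0 * ((M.ε (k : ℤ) ω) ^ 2 - M.σ2 (k : ℤ))
      + M.ε (k : ℤ) ω * ∑' l : ℕ, M.ftil n v w (l + 1) 0 * M.ε ((k : ℤ) - ((l : ℤ) + 1)) ω)

/-- The defining property (Ass5) of the asymptotic covariance parameter
`b = β_n²(v,w,v',w')` with constant `C`. -/
def BetaCond (n : ℕ) (v w v' w' : ℕ → ℝ) (b C : ℝ) : Prop :=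
  ∀ n' m' : ℕ, 1 ≤ n' →
    |M.ftil n v w 0 0 * M.ftil n v' w' 0 0 *
        ∑ j ∈ Icc 1 n', (M.γ4 ((m' + j : ℕ) : ℤ) - (M.σ2 ((m' + j : ℕ) : ℤ)) ^ 2)
      + ∑ j ∈ Icc 1 n', ∑ l ∈ Icc 1 (j - 1),
          M.ftil n v w (j - l) 0 * M.ftil n v' w' (j - l) 0 *
            (M.σ2 ((m' + j : ℕ) : ℤ) * M.σ2 ((m' + l : ℕ) : ℤ))
      - (n' : ℝ) * b| ≤ C * (n' : ℝ) ^ (1 - M.θ)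

/-- The defining property (Ass4) of the asymptotic variance parameter `a = α_n(v,w)`. -/
def AlphaCond (n : ℕ) (v w : ℕ → ℝ) (a C : ℝ) : Prop :=
  0 ≤ a ∧ M.BetaCond n v w v w (a ^ 2) C

/-- The standing assumptions on the model: probability space, independent mean-zero
innovations with uniformly bounded `(4+δ)`-moments and Cesàro-convergent moments of
order 2, 3, 4, and Assumption (A) on the coefficients with `0 < θ < 1/2`. -/
def IsValid : Prop :=
  IsProbabilityMeasure M.P ∧
  (∀ k, Measurable (M.ε k)) ∧
  iIndepFun M.ε M.P ∧
  (∀ k, ∫ ω, M.ε k ω ∂M.P = 0) ∧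
  0 < M.δ ∧
  (∃ K : ℝ, ∀ k, ∫ ω, |M.ε k ω| ^ ((4 : ℝ) + M.δ) ∂M.P ≤ K) ∧
  (∀ r ∈ ({2, 3, 4} : Set ℕ), ∃ Lr : ℝ,
    Tendsto (fun n : ℕ => (n : ℝ)⁻¹ * ∑ i ∈ range n, ∫ ω, (M.ε ((i : ℤ) + 1) ω) ^ r ∂M.P)
      atTop (nhds Lr)) ∧
  0 < M.θ ∧ M.θ < 1 / 2 ∧
  (∃ C : ℝ, ∀ n : ℕ, ∀ j : ℕ, 1 ≤ j → ∀ ν < M.d n,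
    |M.c n j ν| ^ 2 ≤ C * (j : ℝ) ^ (-(3 / 2 : ℝ) - M.θ))

/-- Entry `(ν,μ)` of the sample covariance matrix `Σ̂_n` (full sample). -/
def SigmaHatEntry (n : ℕ) (ν μ : ℕ) (ω : Ω) : ℝ :=
  (n : ℝ)⁻¹ * ∑ i ∈ Icc 1 n, M.Y n (i : ℤ) ν ω * M.Y n (i : ℤ) μ ω

/-- Entry `(ν,μ)` of `Σ_n = E Σ̂_n`. -/
def SigmaEntry (n : ℕ) (ν μ : ℕ) : ℝ := ∫ ω, M.SigmaHatEntry n ν μ ω ∂M.P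

/-- `μ̂_n = d_n⁻¹ tr(Σ̂_n)`. -/
def muHat (n : ℕ) (ω : Ω) : ℝ :=
  (M.d n : ℝ)⁻¹ * ∑ ν ∈ range (M.d n), M.SigmaHatEntry n ν ν ω

/-- `μ_n = d_n⁻¹ tr(Σ_n)`. -/
def mu0 (n : ℕ) : ℝ := (M.d n : ℝ)⁻¹ * ∑ ν ∈ range (M.d n), M.SigmaEntry n ν ν

/-- The bilinear form `v' Σ̂_n^s(W) w` of the shrinkage estimator. -/
def shrinkHatForm (n : ℕ) (v w : ℕ → ℝ) (Wt : ℝ) (ω : Ω) : ℝ :=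
  (1 - Wt) * ∑ ν ∈ range (M.d n), ∑ μ ∈ range (M.d n), v ν * w μ * M.SigmaHatEntry n ν μ ω
    + Wt * M.muHat n ω * ∑ ν ∈ range (M.d n), v ν * w ν

/-- The bilinear form `v' Σ_{n0}^s(W) w` of the shrunken true covariance matrix. -/
def shrinkOracleForm (n : ℕ) (v w : ℕ → ℝ) (Wt : ℝ) : ℝ :=
  (1 - Wt) * ∑ ν ∈ range (M.d n), ∑ μ ∈ range (M.d n), v ν * w μ * M.SigmaEntry n ν μ
    + Wt * M.mu0 n * ∑ ν ∈ range (M.d n), v ν * w ν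

/-- `A_n(W) = √n · v'(Σ̂_n^s(W) − Σ_{n0}^s(W))w`. -/
def Aform (n : ℕ) (v w : ℕ → ℝ) (Wt : ℝ) (ω : Ω) : ℝ :=
  Real.sqrt n * (M.shrinkHatForm n v w Wt ω - M.shrinkOracleForm n v w Wt)

/-- The MSE-optimal shrinkage weight
`W_n* = E‖Σ̂_n − Σ_n‖_F*² / E‖μ_n I − Σ̂_n‖_F*²`. -/
def Wopt (n : ℕ) : ℝ :=
  ((M.d n : ℝ)⁻¹ * ∑ ν ∈ range (M.d n), ∑ μ ∈ range (M.d n),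
      ∫ ω, (M.SigmaHatEntry n ν μ ω - M.SigmaEntry n ν μ) ^ 2 ∂M.P) /
  ((M.d n : ℝ)⁻¹ * ∑ ν ∈ range (M.d n), ∑ μ ∈ range (M.d n),
      ∫ ω, ((if ν = μ then M.mu0 n else 0) - M.SigmaHatEntry n ν μ ω) ^ 2 ∂M.P)

/-- The sequential sample covariance matrix `Σ̂_n(t) = n⁻¹ Σ_{i ≤ ⌊nt⌋} Y_{ni} Y_{ni}'`. -/
def SigmaHatMat (n : ℕ) (t : ℝ) (ω : Ω) : Matrix (Fin (M.d n)) (Fin (M.d n)) ℝ :=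
  Matrix.of fun ν μ =>
    (n : ℝ)⁻¹ * ∑ i ∈ Icc 1 ⌊(n : ℝ) * t⌋₊, M.Y n (i : ℤ) (ν : ℕ) ω * M.Y n (i : ℤ) (μ : ℕ) ω

/-- `Σ_n(t) = E Σ̂_n(t)`. -/
def SigmaMat (n : ℕ) (t : ℝ) : Matrix (Fin (M.d n)) (Fin (M.d n)) ℝ :=
  Matrix.of fun ν μ => ∫ ω, M.SigmaHatMat n t ω ν μ ∂M.P

/-- The scaled trace norm process
`T_n(t) = √n ( ‖Σ̂_n(t)‖_tr* − ‖Σ_n(t)‖_tr* )` (trace norm = trace for covariance matrices). -/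
def Ttrace (n : ℕ) (t : ℝ) (ω : Ω) : ℝ :=
  Real.sqrt n * ((M.d n : ℝ)⁻¹ * Matrix.trace (M.SigmaHatMat n t ω)
    - (M.d n : ℝ)⁻¹ * Matrix.trace (M.SigmaMat n t))

/-- Lag-`τ` cross-covariance `γ_n^{(i,j)}(τ) = Cov((Y_{n0}^{(i)})², (Y_{nτ}^{(j)})²)`. -/
def gammaCross (n : ℕ) (i j : ℕ) (τ : ℕ) : ℝ :=
  ∫ ω, (M.Y n 0 i ω) ^ 2 * (M.Y n (τ : ℤ) j ω) ^ 2 ∂M.P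
    - (∫ ω, (M.Y n 0 i ω) ^ 2 ∂M.P) * (∫ ω, (M.Y n (τ : ℤ) j ω) ^ 2 ∂M.P)

/-- `μ̂_n(i) = n⁻¹ Σ_{k=1}^n Y_k(e_i)²`. -/
def muHatSq (n : ℕ) (i : ℕ) (ω : Ω) : ℝ :=
  (n : ℝ)⁻¹ * ∑ k ∈ Icc 1 n, (M.Y n (k : ℤ) i ω) ^ 2

/-- The sample lag-`τ` cross-covariance `γ̂_n^{(i,j)}(τ)`. -/
def gammaHat (n : ℕ) (i j : ℕ) (τ : ℕ) (ω : Ω) : ℝ :=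
  (n : ℝ)⁻¹ * ∑ k ∈ Icc 1 (n - τ),
    ((M.Y n (k : ℤ) i ω) ^ 2 - M.muHatSq n i ω) *
      ((M.Y n ((k : ℤ) + (τ : ℤ)) j ω) ^ 2 - M.muHatSq n j ω)

/-- The lag-window estimator `β̂_n²(i,j)`. -/
def betaHat (wwin : ℕ → ℕ → ℝ) (mlag : ℕ) (n i j : ℕ) (ω : Ω) : ℝ :=
  M.gammaHat n i j 0 ω + 2 * ∑ τ ∈ Icc 1 mlag, wwin mlag τ * M.gammaHat n i j τ ω

/-- The estimator `σ̂²_{tr,n} = d_n⁻² Σ_{i,j} β̂_n²(i,j)`. -/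
def sigmaHatTr (wwin : ℕ → ℕ → ℝ) (mlag : ℕ) (n : ℕ) (ω : Ω) : ℝ :=
  ((M.d n : ℝ) ^ 2)⁻¹ * ∑ i ∈ range (M.d n), ∑ j ∈ range (M.d n),
    M.betaHat wwin mlag n i j ω

end Model

/-- A family of weighting vectors with uniformly bounded ℓ1-norm. -/
def L1Bdd (M : Model Ω) (v : ℕ → ℕ → ℝ) : Prop :=
  ∃ C : ℝ, ∀ n, ∑ ν ∈ range (M.d n), |v n ν| ≤ C

/-- `L_n`-indexed families of weighting vectors with uniformly bounded ℓ1-norm. -/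
def L1BddFam (M : Model Ω) (L : ℕ → ℕ) (v : ℕ → ℕ → ℕ → ℝ) : Prop :=
  ∃ C : ℝ, ∀ n, ∀ j < L n, ∑ ν ∈ range (M.d n), |v n j ν| ≤ C

/-- `M'` is an (equally distributed) version of the model `M` on a new probability space. -/
def EquivModel {Ω' : Type} [MeasurableSpace Ω'] (M : Model Ω) (M' : Model Ω') : Prop :=
  M'.d = M.d ∧ M'.c = M.c ∧ M'.θ = M.θ ∧ M'.δ = M.δ ∧
    M'.P.map (fun ω (k : ℤ) => M'.ε k ω) = M.P.map (fun ω (k : ℤ) => M.ε k ω)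

/-- A standard Brownian motion on `[0,∞)`. -/
def IsStdBM (P : Measure Ω) (W : ℝ → Ω → ℝ) : Prop :=
  (∀ᵐ ω ∂P, W 0 ω = 0) ∧
  (∀ᵐ ω ∂P, Continuous fun t => W t ω) ∧
  (∀ s t : ℝ, 0 ≤ s → s ≤ t →
    P.map (fun ω => W t ω - W s ω) = gaussianReal 0 (Real.toNNReal (t - s))) ∧
  (∀ (m : ℕ) (u : ℕ → ℝ), Monotone u → (∀ i, 0 ≤ u i) →
    iIndepFun
      (fun (i : Fin m) (ω : Ω) => W (u ((i : ℕ) + 1)) ω - W (u (i : ℕ)) ω) P)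

/-- A centered Brownian motion with variance parameter `a`, i.e. `Cov(W_s,W_t) = min(s,t)·a`. -/
def IsBMVar (P : Measure Ω) (W : ℝ → Ω → ℝ) (a : ℝ) : Prop :=
  (∀ᵐ ω ∂P, W 0 ω = 0) ∧
  (∀ᵐ ω ∂P, Continuous fun t => W t ω) ∧
  (∀ s t : ℝ, 0 ≤ s → 0 ≤ t → ∫ ω, W s ω * W t ω ∂P = min s t * a) ∧
  (∀ s t : ℝ, 0 ≤ s → s ≤ t →
    P.map (fun ω => W t ω - W s ω) = gaussianReal 0 (Real.toNNReal ((t - s) * a))) ∧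
  (∀ (m : ℕ) (u : ℕ → ℝ), Monotone u → (∀ i, 0 ≤ u i) →
    iIndepFun
      (fun (i : Fin m) (ω : Ω) => W (u ((i : ℕ) + 1)) ω - W (u (i : ℕ)) ω) P)

/-- An `L`-dimensional centered Brownian motion with covariance function
`E(B_s^i B_t^j) = min(s,t) Γ i j`. -/
def IsBMCov (P : Measure Ω) (L : ℕ) (B : ℝ → Ω → Fin L → ℝ) (Γ : Fin L → Fin L → ℝ) : Prop :=
  (∀ᵐ ω ∂P, ∀ j, B 0 ω j = 0) ∧
  (∀ᵐ ω ∂P, ∀ j, Continuous fun t => B t ω j) ∧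
  (∀ s t : ℝ, 0 ≤ s → 0 ≤ t → ∀ i j, ∫ ω, B s ω i * B t ω j ∂P = min s t * Γ i j) ∧
  (∀ (a : Fin L → ℝ) (s t : ℝ), 0 ≤ s → s ≤ t →
    P.map (fun ω => ∑ i, a i * (B t ω i - B s ω i)) =
      gaussianReal 0 (Real.toNNReal ((t - s) * ∑ i, ∑ j, a i * a j * Γ i j))) ∧
  (∀ (m : ℕ) (u : ℕ → ℝ), Monotone u → (∀ i, 0 ≤ u i) →
    iIndepFun
      (fun (i : Fin m) (ω : Ω) => fun j => B (u ((i : ℕ) + 1)) ω j - B (u (i : ℕ)) ω j) P)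

/-- The strong approximation (i) of Theorem 2.3 in `R^{L_n}`:
`‖L_n^{-1/2} D_{nt} − B_n(t)‖ ≤ C_n t^{1/2−λ_n}` for all `t`, a.s. -/
def StrongApproxGen {Ω' : Type} [MeasurableSpace Ω'] (P : Measure Ω') (d : ℕ → ℕ)
    (Yg : ℕ → ℤ → ℕ → Ω' → ℝ) (L : ℕ → ℕ) (v w : ℕ → ℕ → ℕ → ℝ)
    (B : (n : ℕ) → ℝ → Ω' → Fin (L n) → ℝ) (C lam : ℕ → ℝ) : Prop :=
  ∀ n, 0 < lam n ∧ ∀ᵐ ω ∂P, ∀ t : ℕ,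
    Real.sqrt (∑ j : Fin (L n),
        ((L n : ℝ) ^ (-(1 / 2 : ℝ)) * Dgen P d Yg n (v n (j : ℕ)) (w n (j : ℕ)) t ω
          - B n (t : ℝ) ω j) ^ 2)
      ≤ C n * (t : ℝ) ^ ((1 : ℝ) / 2 - lam n)

/-- The condition `C_n n^{−λ_n} = o(1)` (condition (CrucialCond) of the paper). -/
def CrucialCond (C lam : ℕ → ℝ) : Prop :=
  Tendsto (fun n : ℕ => C n * (n : ℝ) ^ (-(lam n))) atTop (nhds 0)

/-- The construction of the multivariate strong approximation theorem together with the
condition `C_n n^{−λ_n} = o(1)` on its constants. -/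
def CrucialHolds (M : Model Ω) (L : ℕ → ℕ) (v w : ℕ → ℕ → ℕ → ℝ)
    (β : ℕ → ℕ → ℕ → ℝ) : Prop :=
  ∃ (Ω' : Type) (_ : MeasurableSpace Ω') (M' : Model Ω')
    (B : (n : ℕ) → ℝ → Ω' → Fin (L n) → ℝ) (C lam : ℕ → ℝ),
    EquivModel M M' ∧ M'.IsValid ∧
    (∀ n, IsBMCov M'.P (L n) (B n) (fun j k => (L n : ℝ)⁻¹ * β n (j : ℕ) (k : ℕ))) ∧
    StrongApproxGen M'.P M'.d M'.Y L v w B C lam ∧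
    CrucialCond C lam

/-- The combined covariance parameters of the shrinkage system
`(v,w), (e_0,e_0), …, (e_{d−1},e_{d−1})`. -/
def betaSys (α : ℕ → ℝ) (βvw : ℕ → ℕ → ℝ) (βee : ℕ → ℕ → ℕ → ℝ) (n a b : ℕ) : ℝ :=
  if a = 0 then (if b = 0 then (α n) ^ 2 else βvw n (b - 1))
  else if b = 0 then βvw n (a - 1) else βee n (a - 1) (b - 1)

/-- The approximating Gaussian functional of the shrinkage estimator:
`B_n(W) = (1−W) B̄_n(1)_0 + W (v'w) d_n^{-1/2} Σ_{j=1}^{d_n} B̄_n(1)_j`. -/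
def calBgen {Ω' : Type} (dn : ℕ) (vw : ℝ) (B : ℝ → Ω' → Fin (dn + 1) → ℝ)
    (Wt : ℝ) (ω : Ω') : ℝ :=
  (1 - Wt) * B 1 ω 0 + Wt * vw * (dn : ℝ) ^ (-(1 / 2 : ℝ)) * ∑ j : Fin dn, B 1 ω j.succ

end SvS

/-!
Polynomial method: replacing each `x i` by its `k`-th symmetric tensor power turns the Gram
matrix `G` into its entrywise `k`-th power `G^{∘k}`, whose off-diagonal entries are at most
`(A² / d)^k`, while its rank is at most `dim Sym^k ℝ^d = C(d + k - 1, k)`. The rank bound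
`(tr G^{∘k})² ≤ rank · ‖G^{∘k}‖_F²` then gives `m ≤ 2 C(d + k - 1, k)` as soon as
`C(d + k - 1, k) (A² / d)^k ≤ 1 / 2`, which holds for `k ≈ 24 A²`.
-/

theorem gram_trace_sq_le_card_mul_frobenius {ι κ : Type*} [Fintype ι] [Fintype κ]
    (Z : ι → κ → ℝ) :
    (∑ i, ∑ μ, Z i μ ^ 2) ^ 2 ≤ Fintype.card κ * ∑ i, ∑ j, (∑ μ, Z i μ * Z j μ) ^ 2 := by
  have hswap : ∑ i, ∑ j, (∑ μ, Z i μ * Z j μ) ^ 2 = ∑ μ, ∑ ν, (∑ i, Z i μ * Z i ν) ^ 2 := by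
    simp only [sq, sum_mul_sum]
    rw [sum_comm]
    simp_rw [sum_comm (s := (univ : Finset ι)) (t := (univ : Finset κ))]
    exact sum_congr rfl fun _ _ => sum_congr rfl fun _ _ =>
      sum_congr rfl fun _ _ => sum_congr rfl fun _ _ => by ring
  calc (∑ i, ∑ μ, Z i μ ^ 2) ^ 2 = (∑ μ, ∑ i, Z i μ ^ 2) ^ 2 := by rw [sum_comm]
    _ ≤ Fintype.card κ * ∑ μ, (∑ i, Z i μ ^ 2) ^ 2 := by
      simpa using sq_sum_le_card_mul_sum_sq (s := univ) (f := fun μ => ∑ i, Z i μ ^ 2)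
    _ ≤ Fintype.card κ * ∑ μ, ∑ ν, (∑ i, Z i μ * Z i ν) ^ 2 := by
      gcongr with μ
      simpa [sq] using single_le_sum (f := fun ν => (∑ i, Z i μ * Z i ν) ^ 2)
        (fun ν _ => sq_nonneg _) (mem_univ μ)
    _ = _ := by rw [hswap]

section

variable {α : Type*} [Fintype α] [DecidableEq α]

/-- Coordinates of `x^{⊗k}` in the orthonormal basis of `Sym^k ℝ^α` indexed by multisets. -/
def symTensorPow (k : ℕ) (x : α → ℝ) (μ : Sym α k) : ℝ :=
  √(μ.val.countPerms) * (μ.val.map x).prod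

theorem sum_symTensorPow_mul (k : ℕ) (x y : α → ℝ) :
    ∑ μ, symTensorPow k x μ * symTensorPow k y μ = (∑ a, x a * y a) ^ k := by
  rw [sum_pow, sym_univ]
  refine sum_congr rfl fun μ _ => ?_
  rw [symTensorPow, symTensorPow, Multiset.prod_map_mul]
  have := Real.mul_self_sqrt (Nat.cast_nonneg (α := ℝ) μ.val.countPerms)
  linear_combination (μ.val.map x).prod * (μ.val.map y).prod * this

variable (α)

theorem card_sym_mul_pow_le (k : ℕ) :
    (Fintype.card (Sym α k) : ℝ) * k ^ k ≤ (Real.exp 1 * (Fintype.card α + k)) ^ k := by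
  have hchoose := Nat.choose_le_pow_div (α := ℝ) k (Fintype.card α + k - 1)
  have hexp := Real.pow_div_factorial_le_exp (k : ℝ) k.cast_nonneg k
  have hbase : ((Fintype.card α + k - 1 : ℕ) : ℝ) ≤ Fintype.card α + k := by
    exact_mod_cast Nat.sub_le _ _
  rw [Sym.card_sym_eq_choose, mul_pow, ← Real.exp_nat_mul, mul_one]
  calc ((Fintype.card α + k - 1).choose k : ℝ) * k ^ k
      ≤ (Fintype.card α + k - 1 : ℕ) ^ k / k.factorial * k ^ k := by gcongr
    _ = (Fintype.card α + k - 1 : ℕ) ^ k * (k ^ k / k.factorial) := by ring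
    _ ≤ Real.exp k * (Fintype.card α + k) ^ k := by
      rw [mul_comm]; gcongr

theorem card_sym_mul_div_pow_le_half {k : ℕ} {s : ℝ} (hs : 0 < s)
    (hsα : 4 * s ≤ Fintype.card α) (hk : 24 * s ≤ k) (hk6 : 6 ≤ k) :
    (Fintype.card (Sym α k) : ℝ) * (s / Fintype.card α) ^ k ≤ 1 / 2 := by
  set n : ℝ := (Fintype.card α : ℝ)
  have hn : 0 < n := by linarith
  have hk0 : (0 : ℝ) < k := by linarith
  have hratio : Real.exp 1 * (n + k) * (s / (k * n)) ≤ 4 / 5 := by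
    have h1 : s / k ≤ 1 / 24 := by rw [div_le_div_iff₀ hk0 (by norm_num)]; linarith
    have h2 : s / n ≤ 1 / 4 := by rw [div_le_div_iff₀ hn (by norm_num)]; linarith
    have hsplit : Real.exp 1 * (n + k) * (s / (k * n)) = Real.exp 1 * (s / k + s / n) := by
      field_simp
    rw [hsplit]
    nlinarith [Real.exp_pos 1, Real.exp_one_lt_d9]
  calc (Fintype.card (Sym α k) : ℝ) * (s / n) ^ k
      = (Fintype.card (Sym α k) * k ^ k) * (s / (k * n)) ^ k := by
        rw [mul_assoc, ← mul_pow]; congr 2; field_simp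
    _ ≤ (Real.exp 1 * (n + k)) ^ k * (s / (k * n)) ^ k := by
        gcongr; exact card_sym_mul_pow_le α k
    _ = (Real.exp 1 * (n + k) * (s / (k * n))) ^ k := (mul_pow ..).symm
    _ ≤ (4 / 5) ^ k := by gcongr
    _ ≤ (4 / 5) ^ 6 := pow_le_pow_of_le_one (by norm_num) (by norm_num) hk6
    _ ≤ 1 / 2 := by norm_num

end

theorem card_le_two_mul_card_sym {ι α : Type*} [Fintype ι] [Fintype α] [DecidableEq α]
    (x : ι → EuclideanSpace ℝ α) (hx : ∀ i, ‖x i‖ = 1) {ε : ℝ}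
    (hε : ∀ i j, i ≠ j → |(inner ℝ (x i) (x j) : ℝ)| ≤ ε) {k : ℕ}
    (hk : (Fintype.card (Sym α k) : ℝ) * ε ^ (2 * k) ≤ 1 / 2) :
    (Fintype.card ι : ℝ) ≤ 2 * Fintype.card (Sym α k) := by
  classical
  set m : ℝ := (Fintype.card ι : ℝ)
  set Z : ι → Sym α k → ℝ := fun i => symTensorPow k (x i)
  have hgram : ∀ i j, ∑ μ, Z i μ * Z j μ = (inner ℝ (x i) (x j) : ℝ) ^ k := fun i j => by
    simp only [Z, sum_symTensorPow_mul, PiLp.inner_apply, RCLike.inner_apply, conj_trivial,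
      mul_comm]
  have hdiag : ∀ i, (inner ℝ (x i) (x i) : ℝ) = 1 := fun i => by
    rw [real_inner_self_eq_norm_sq, hx, one_pow]
  have hε0 : 0 ≤ ε ^ (2 * k) := (even_two_mul k).pow_nonneg ε
  have hentry : ∀ i j, (∑ μ, Z i μ * Z j μ) ^ 2 ≤ (if i = j then 1 else 0) + ε ^ (2 * k) := by
    intro i j
    rw [hgram]
    split_ifs with hij
    · rw [hij, hdiag, one_pow, one_pow]; linarith
    · rw [zero_add, ← pow_mul, mul_comm, ← (even_two_mul k).pow_abs]
      exact pow_le_pow_left₀ (abs_nonneg _) (hε i j hij) _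
  have htrace : ∑ i, ∑ μ, Z i μ ^ 2 = m := by
    simp only [sq, hgram, hdiag, one_pow, sum_const, card_univ, nsmul_eq_mul, mul_one, m]
  have hfrob : ∑ i, ∑ j, (∑ μ, Z i μ * Z j μ) ^ 2 ≤ m + m ^ 2 * ε ^ (2 * k) := by
    calc _ ≤ ∑ i : ι, ∑ j : ι, ((if i = j then 1 else 0) + ε ^ (2 * k)) := by
          gcongr with i _ j; exact hentry i j
      _ = m + m ^ 2 * ε ^ (2 * k) := by simp [sum_add_distrib, m]; ring
  have hrank := gram_trace_sq_le_card_mul_frobenius Z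
  rw [htrace] at hrank
  have hquad : m ^ 2 ≤ Fintype.card (Sym α k) * m + m ^ 2 / 2 :=
    calc m ^ 2 ≤ Fintype.card (Sym α k) * (m + m ^ 2 * ε ^ (2 * k)) := hrank.trans (by gcongr)
      _ = Fintype.card (Sym α k) * m + m ^ 2 * (Fintype.card (Sym α k) * ε ^ (2 * k)) := by
        ring
      _ ≤ Fintype.card (Sym α k) * m + m ^ 2 / 2 := by nlinarith [sq_nonneg m]
  nlinarith [show (0 : ℝ) ≤ Fintype.card (Sym α k) from Nat.cast_nonneg _]

theorem card_le_div_pow_of_inner_sq_le {ι α : Type*} [Fintype ι] [Fintype α]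
    [DecidableEq α] (x : ι → EuclideanSpace ℝ α) (hx : ∀ i, ‖x i‖ = 1) {s : ℝ} (hs : 0 < s)
    (hsα : 4 * s ≤ Fintype.card α)
    (hinner : ∀ i j, i ≠ j → (inner ℝ (x i) (x j) : ℝ) ^ 2 ≤ s / Fintype.card α) {k : ℕ}
    (hk : 24 * s ≤ k) (hk6 : 6 ≤ k) :
    (Fintype.card ι : ℝ) ≤ (Fintype.card α / s) ^ k := by
  have hα : (0 : ℝ) < Fintype.card α := by linarith
  have hhalf := card_sym_mul_div_pow_le_half α hs hsα hk hk6
  have hcard := card_le_two_mul_card_sym x hx (ε := √(s / Fintype.card α)) (k := k)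
    (fun i j hij => Real.abs_le_sqrt (hinner i j hij))
    (by rwa [pow_mul, Real.sq_sqrt (div_pos hs hα).le])
  calc (Fintype.card ι : ℝ) ≤ 2 * Fintype.card (Sym α k) := hcard
    _ ≤ (Fintype.card α / s) ^ k := by
      rw [← inv_div, inv_pow, ← one_div, le_div_iff₀ (pow_pos (div_pos hs hα) k)]
      linarith

namespace SvS

variable {Ω : Type} [MeasurableSpace Ω]

/-- cheap version of the Kabatjanskii–Levenstein bound (Theorem 4.6). -/
theorem statement17 :
    ∃ C : ℝ, 0 < C ∧ ∀ (d m : ℕ) (A : ℝ) (x : Fin m → EuclideanSpace ℝ (Fin d)),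
      (∀ i, ‖x i‖ = 1) →
      (∀ i j, i ≠ j → |(inner ℝ (x i) (x j) : ℝ)| ≤ A * (d : ℝ) ^ (-(1 / 2 : ℝ))) →
      1 / 2 ≤ A → A ≤ (1 / 2) * Real.sqrt d →
      (m : ℝ) ≤ (C * (d : ℝ) / A ^ 2) ^ (C * A ^ 2) := by
  refine ⟨28, by norm_num, fun d m A x hx hinner hA hAd => ?_⟩
  have hA0 : 0 < A := by linarith
  have hdA : 4 * A ^ 2 ≤ d := by nlinarith [Real.sq_sqrt d.cast_nonneg]
  have hd : (0 : ℝ) < d := by nlinarith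
  have hsq : (A * (d : ℝ) ^ (-(1 / 2 : ℝ))) ^ 2 = A ^ 2 / d := by
    rw [mul_pow, ← Real.rpow_mul_natCast hd.le]
    norm_num [Real.rpow_neg_one, div_eq_mul_inv]
  set k := ⌈24 * A ^ 2⌉₊
  have hk : 24 * A ^ 2 ≤ k := Nat.le_ceil _
  have hk28 : (k : ℝ) ≤ 28 * A ^ 2 := by
    nlinarith [Nat.ceil_lt_add_one (show 0 ≤ 24 * A ^ 2 by positivity)]
  have hk6 : 6 ≤ k := by exact_mod_cast (show (6 : ℝ) ≤ k by nlinarith)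
  have hm := card_le_div_pow_of_inner_sq_le x hx (pow_pos hA0 2) (by simpa using hdA)
    (fun i j hij => by
      rw [Fintype.card_fin, ← hsq, ← sq_abs]; exact pow_le_pow_left₀ (abs_nonneg _) (hinner i j hij) 2)
    hk hk6
  simp only [Fintype.card_fin] at hm
  have ht : 1 ≤ (d : ℝ) / A ^ 2 := by rw [le_div_iff₀ (by positivity)]; linarith
  calc (m : ℝ) ≤ ((d : ℝ) / A ^ 2) ^ (k : ℝ) := by rwa [Real.rpow_natCast]
    _ ≤ ((d : ℝ) / A ^ 2) ^ (28 * A ^ 2) := Real.rpow_le_rpow_of_exponent_le ht hk28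
    _ ≤ (28 * (d : ℝ) / A ^ 2) ^ (28 * A ^ 2) := by gcongr; linarith

end SvS
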